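/- arXiv:2205.03507 — 5 statements merged into one kernel-verified Lean document; each statement's English description precedes it below -/
import Mathlib

section
/- Let r ≥ 2 be an integer radix and D ∈ ℕ. For every real number t with |t| ≤ r^{-D} there exists a digit sequence e : ℕ → ℤ with |e_i| ≤ r − 1 for all i such that t = Σ_{i=0}^∞ e_i · r^{-(D+i+1)}. That is, every real number of absolute value at most r^{-D} is exactly representable by a symmetric maximally redundant signed-digit tail occupying only the positions after position D (taking D = 0, every real in [−1, 1] is representable by such a digit sequence). -/
/-!
Rescaling by `r ^ D` reduces the claim to `|x| ≤ 1`. There the greedy algorithm works: take as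
digit `⌊r x⌋` clamped to `[-(r - 1), r - 1]` and continue with the remainder `r x - digit`. The
clamping is what keeps the remainder in `[-1, 1]` (the unclamped floor would produce the digit `r`
at `x = 1`), so after `n` digits the error is the remainder times `r⁻¹ ^ n`, which tends to `0`.
-/

open Filter Finset

namespace SignedDigit

noncomputable def digit (r : ℕ) (x : ℝ) : ℤ :=
  max (-((r : ℤ) - 1)) (min ((r : ℤ) - 1) ⌊(r : ℝ) * x⌋)

noncomputable def remainder (r : ℕ) (x : ℝ) : ℕ → ℝ
  | 0 => x
  | n + 1 => r * remainder r x n - digit r (remainder r x n)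

noncomputable def digits (r : ℕ) (x : ℝ) (n : ℕ) : ℤ :=
  digit r (remainder r x n)

variable {r : ℕ}

lemma abs_digit_le (hr : 1 ≤ r) (x : ℝ) : |digit r x| ≤ (r : ℤ) - 1 := by
  unfold digit
  rw [abs_le]
  exact ⟨le_max_left _ _, max_le (by omega) (min_le_left _ _)⟩

lemma abs_mul_sub_digit_le_one {x : ℝ} (hx : |x| ≤ 1) : |r * x - digit r x| ≤ 1 := by
  have hr : (0 : ℝ) ≤ r := r.cast_nonneg
  obtain ⟨hx₁, hx₂⟩ := abs_le.mp hx
  have hdigit : (digit r x : ℝ) = max (-((r : ℝ) - 1)) (min ((r : ℝ) - 1) ⌊(r : ℝ) * x⌋) := by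
    simp [digit]
  rw [abs_le, hdigit, neg_le_sub_iff_le_add, sub_le_comm]
  constructor
  · exact max_le (by nlinarith)
      ((min_le_right _ _).trans (by linarith [Int.floor_le ((r : ℝ) * x)]))
  · exact le_max_of_le_right (le_min (by nlinarith) (Int.sub_one_lt_floor _).le)

lemma abs_remainder_le_one {x : ℝ} (hx : |x| ≤ 1) (n : ℕ) : |remainder r x n| ≤ 1 := by
  induction n with
  | zero => exact hx
  | succ n ih => exact abs_mul_sub_digit_le_one ih

lemma sub_sum_digits_eq (hr : r ≠ 0) (x : ℝ) (n : ℕ) :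
    x - ∑ i ∈ range n, (digits r x i : ℝ) * (r : ℝ)⁻¹ ^ (i + 1) =
      remainder r x n * (r : ℝ)⁻¹ ^ n := by
  induction n with
  | zero => simp [remainder]
  | succ n ih =>
    have hr' : (r : ℝ) ≠ 0 := Nat.cast_ne_zero.mpr hr
    rw [sum_range_succ, ← sub_sub, ih, remainder, digits]
    have hinv : (r : ℝ) * (r : ℝ)⁻¹ = 1 := mul_inv_cancel₀ hr'
    linear_combination (-(remainder r x n * (r : ℝ)⁻¹ ^ n)) * hinv

theorem hasSum_digits (hr : 2 ≤ r) {x : ℝ} (hx : |x| ≤ 1) :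
    HasSum (fun i => (digits r x i : ℝ) * (r : ℝ)⁻¹ ^ (i + 1)) x := by
  have hb₀ : (0 : ℝ) ≤ (r : ℝ)⁻¹ := by positivity
  have hb₁ : (r : ℝ)⁻¹ < 1 := inv_lt_one_of_one_lt₀ (by exact_mod_cast hr)
  have hbound : ∀ i, ‖(digits r x i : ℝ) * (r : ℝ)⁻¹ ^ (i + 1)‖ ≤ (r : ℝ)⁻¹ ^ i := by
    intro i
    have hdigit : |(digits r x i : ℝ)| ≤ r := by
      have : |digits r x i| ≤ r := (abs_digit_le (by omega) _).trans (by omega)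
      exact_mod_cast this
    rw [norm_mul, norm_pow, Real.norm_eq_abs, Real.norm_eq_abs, abs_of_nonneg hb₀]
    calc |(digits r x i : ℝ)| * (r : ℝ)⁻¹ ^ (i + 1) ≤ r * (r : ℝ)⁻¹ ^ (i + 1) := by gcongr
      _ = (r : ℝ)⁻¹ ^ i := by rw [pow_succ', ← mul_assoc, mul_inv_cancel₀ (by positivity), one_mul]
  rw [hasSum_iff_tendsto_nat_of_summable_norm
    ((summable_geometric_of_lt_one hb₀ hb₁).of_nonneg_of_le (fun _ => norm_nonneg _) hbound)]
  have herror : Tendsto (fun n => remainder r x n * (r : ℝ)⁻¹ ^ n) atTop (nhds 0) := by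
    refine squeeze_zero_norm (fun n => ?_) (tendsto_pow_atTop_nhds_zero_of_lt_one hb₀ hb₁)
    rw [norm_mul, norm_pow, Real.norm_eq_abs, Real.norm_eq_abs, abs_of_nonneg hb₀]
    exact mul_le_of_le_one_left (by positivity) (abs_remainder_le_one hx n)
  have hlim := (tendsto_const_nhds (x := x)).sub herror
  rw [sub_zero] at hlim
  refine hlim.congr fun n => ?_
  rw [← sub_sum_digits_eq (by omega) x n, sub_sub_cancel]

end SignedDigit

open SignedDigit in
/-- Every real `t` with `|t| ≤ r^(-D)` is exactly representable by
a symmetric maximally redundant signed-digit radix-`r` tail occupying only the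
positions after position `D`. -/
theorem redundant_tail_representation
    (r D : ℕ) (hr : 2 ≤ r) (t : ℝ) (ht : |t| ≤ (r : ℝ) ^ (-(D : ℤ))) :
    ∃ e : ℕ → ℤ, (∀ i, |e i| ≤ (r : ℤ) - 1) ∧
      HasSum (fun i : ℕ => (e i : ℝ) * (r : ℝ) ^ (-(D + i + 1 : ℤ))) t := by
  have hr₀ : (0 : ℝ) < r := by positivity
  have hpow₀ : (0 : ℝ) < (r : ℝ) ^ (-(D : ℤ)) := zpow_pos hr₀ _
  obtain ⟨x, rfl⟩ : ∃ x, t = (r : ℝ) ^ (-(D : ℤ)) * x :=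
    ⟨t * (r : ℝ) ^ (D : ℤ), by
      rw [mul_left_comm, ← zpow_add₀ hr₀.ne', neg_add_cancel, zpow_zero, mul_one]⟩
  have hx : |x| ≤ 1 := by
    rw [abs_mul, abs_of_pos hpow₀] at ht
    exact (mul_le_iff_le_one_right hpow₀).mp ht
  refine ⟨digits r x, fun i => abs_digit_le (by omega) _, ?_⟩
  refine ((hasSum_digits hr hx).mul_left ((r : ℝ) ^ (-(D : ℤ)))).congr_fun fun i => ?_
  rw [mul_left_comm, ← zpow_natCast, inv_zpow', ← zpow_add₀ hr₀.ne']
  congr 2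
  push_cast
  ring
end

section
/- Let r ≥ 2 be an integer radix and D ≥ 1. For every real number x with |x| ≤ 1 − r^{-D} there exist integer digits d_0, …, d_{D-1} with |d_i| ≤ r − 1 such that |x − Σ_{i=0}^{D-1} d_i · r^{-(i+1)}| ≤ r^{-D}/2. That is, every real of absolute value at most 1 − r^{-D} lies within half a unit in the last place of some D-digit symmetric maximally redundant signed-digit number. -/
lemma digit_sum_mod (r : ℕ) : ∀ (D n : ℕ),
    ∑ j ∈ Finset.range D, (n / r ^ j % r) * r ^ j = n % r ^ D := by
  intro D
  induction D with
  | zero => simp [Nat.mod_one]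
  | succ D ih =>
    intro n
    rw [Finset.sum_range_succ, ih, pow_succ, Nat.mod_mul, add_comm, mul_comm]
    ring

lemma digit_sum_eq (r D n : ℕ) (h : n < r ^ D) :
    ∑ j ∈ Finset.range D, (n / r ^ j % r) * r ^ j = n := by
  rw [digit_sum_mod, Nat.mod_eq_of_lt h]

/-- Every real of absolute value at most `1 - r^(-D)` lies within
half a unit in the last place of some `D`-digit symmetric maximally redundant
signed-digit radix-`r` number. -/
theorem redundant_digit_approximation
    (r D : ℕ) (hr : 2 ≤ r) (hD : 1 ≤ D)
    (x : ℝ) (hx : |x| ≤ 1 - (r : ℝ) ^ (-(D : ℤ))) :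
    ∃ d : ℕ → ℤ, (∀ i, |d i| ≤ (r : ℤ) - 1) ∧
      |x - ∑ i ∈ Finset.range D, (d i : ℝ) * (r : ℝ) ^ (-(i + 1 : ℤ))| ≤
        (r : ℝ) ^ (-(D : ℤ)) / 2 := by
  have hr0 : (0 : ℝ) < r := by positivity
  have hrne : (r : ℝ) ≠ 0 := ne_of_gt hr0
  set m : ℤ := round (x * (r : ℝ) ^ (D : ℤ)) with hm
  set n : ℕ := m.natAbs with hn
  have habs : |x * (r : ℝ) ^ (D : ℤ)| ≤ (r : ℝ) ^ (D : ℤ) - 1 := by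
    rw [abs_mul, abs_of_pos (by positivity : (0:ℝ) < (r : ℝ) ^ (D : ℤ))]
    calc |x| * (r : ℝ) ^ (D : ℤ) ≤ (1 - (r : ℝ) ^ (-(D : ℤ))) * (r : ℝ) ^ (D : ℤ) := by
          apply mul_le_mul_of_nonneg_right hx (by positivity)
      _ = (r : ℝ) ^ (D : ℤ) - 1 := by
          rw [sub_mul, one_mul, ← zpow_add₀ hrne]; simp
  have h1 : |(m : ℝ) - x * (r : ℝ) ^ (D : ℤ)| ≤ 1/2 := by
    rw [hm, abs_sub_comm]; exact abs_sub_round _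
  have h3 : |(m : ℝ)| ≤ (r : ℝ) ^ (D : ℤ) - 1/2 := by
    have h2 : |(m : ℝ)| ≤ |(m : ℝ) - x * (r : ℝ) ^ (D : ℤ)| + |x * (r : ℝ) ^ (D : ℤ)| := by
      calc |(m : ℝ)| = |((m : ℝ) - x * (r : ℝ) ^ (D : ℤ)) + x * (r : ℝ) ^ (D : ℤ)| := by
            congr 1; ring
        _ ≤ _ := abs_add_le _ _
    linarith
  have hnm : (n : ℤ) = |m| := Int.abs_eq_natAbs m ▸ rfl
  have hnlt : n < r ^ D := by
    have hcast : ((r ^ D : ℕ) : ℝ) = (r : ℝ) ^ (D : ℤ) := by push_cast; norm_cast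
    have h4 : ((n : ℤ) : ℝ) < ((r ^ D : ℕ) : ℤ) := by
      rw [hnm]; push_cast [hcast]
      calc |(m:ℝ)| ≤ (r : ℝ) ^ (D : ℤ) - 1/2 := h3
        _ < (r : ℝ) ^ (D : ℤ) := by linarith
    exact_mod_cast h4
  refine ⟨fun i => m.sign * ((n / r ^ (D - 1 - i) % r : ℕ) : ℤ), ?_, ?_⟩
  · intro i
    rw [abs_mul]
    have hs1 : |m.sign| ≤ 1 := by
      rcases lt_trichotomy m 0 with h | h | h
      · simp [Int.sign_eq_neg_one_iff_neg.mpr h]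
      · simp [h]
      · simp [Int.sign_eq_one_iff_pos.mpr h]
    have hs2 : |((n / r ^ (D - 1 - i) % r : ℕ) : ℤ)| ≤ (r : ℤ) - 1 := by
      rw [abs_of_nonneg (by positivity)]
      have : n / r ^ (D - 1 - i) % r < r := Nat.mod_lt _ (by omega)
      omega
    calc |m.sign| * |((n / r ^ (D - 1 - i) % r : ℕ) : ℤ)| ≤ 1 * ((r:ℤ) - 1) := by
          apply mul_le_mul hs1 hs2 (abs_nonneg _) zero_le_one
      _ = (r : ℤ) - 1 := one_mul _
  · have key : ∑ i ∈ Finset.range D, ((m.sign * ((n / r ^ (D - 1 - i) % r : ℕ) : ℤ) : ℤ) : ℝ)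
        * (r : ℝ) ^ (-(i + 1 : ℤ)) = (m : ℝ) * (r : ℝ) ^ (-(D : ℤ)) := by
      have step1 : ∀ i ∈ Finset.range D,
          ((m.sign * ((n / r ^ (D - 1 - i) % r : ℕ) : ℤ) : ℤ) : ℝ) * (r : ℝ) ^ (-(i + 1 : ℤ))
          = (m.sign : ℝ) * (r : ℝ) ^ (-(D : ℤ)) *
            (((n / r ^ (D - 1 - i) % r * r ^ (D - 1 - i) : ℕ) : ℝ)) := by
        intro i hi
        rw [Finset.mem_range] at hi
        have hpow : (r:ℝ) ^ (-(i + 1 : ℤ)) = (r:ℝ) ^ (-(D:ℤ)) * (r:ℝ) ^ (D - 1 - i : ℕ) := by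
          rw [← zpow_natCast (r:ℝ) (D - 1 - i), ← zpow_add₀ hrne]
          congr 1; omega
        rw [hpow]; push_cast; ring_nf
        norm_cast
        rw [Int.cast_mul, Int.cast_natCast]
        ring
      rw [Finset.sum_congr rfl step1, ← Finset.mul_sum]
      have reflect : ∑ i ∈ Finset.range D,
          (((n / r ^ (D - 1 - i) % r * r ^ (D - 1 - i) : ℕ) : ℝ))
          = ∑ j ∈ Finset.range D, (((n / r ^ j % r * r ^ j : ℕ) : ℝ)) :=
        Finset.sum_range_reflect (fun j => (((n / r ^ j % r * r ^ j : ℕ) : ℝ))) D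
      rw [reflect, ← Nat.cast_sum, digit_sum_eq r D n hnlt]
      have hsm : (m.sign : ℝ) * (n : ℝ) = (m : ℝ) := by
        have h := Int.sign_mul_abs m
        rw [Int.abs_eq_natAbs, ← hn] at h
        exact_mod_cast h
      rw [mul_comm ((m.sign:ℝ) * ((r:ℝ)^(-(D:ℤ)))), ← mul_assoc, mul_comm (n:ℝ), hsm]
    rw [key]
    have expand : x - (m : ℝ) * (r : ℝ) ^ (-(D : ℤ))
        = (x * (r : ℝ) ^ (D : ℤ) - m) * (r : ℝ) ^ (-(D : ℤ)) := by
      rw [sub_mul, mul_assoc, ← zpow_add₀ hrne]; simp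
    have h1' : |x * (r : ℝ) ^ (D : ℤ) - m| ≤ 1/2 := by rw [abs_sub_comm]; exact h1
    rw [expand, abs_mul, abs_of_pos (by positivity : (0:ℝ) < (r:ℝ) ^ (-(D:ℤ)))]
    calc |x * (r : ℝ) ^ (D : ℤ) - m| * (r : ℝ) ^ (-(D : ℤ))
        ≤ 1/2 * (r : ℝ) ^ (-(D : ℤ)) := by
          apply mul_le_mul_of_nonneg_right h1' (by positivity)
      _ = (r : ℝ) ^ (-(D : ℤ)) / 2 := by ring
end

section
/- Let r ≥ 2 be an integer radix, D ≥ 1, and let p = Σ_{i=0}^{D-1} d_i · r^{-(i+1)} be a D-digit number in the symmetric maximally redundant signed-digit radix-r representation (integer digits |d_i| ≤ r − 1). Then every real number y with |y − p| ≤ r^{-D} admits a full representation agreeing with p in its first D digits: there exists e : ℕ → ℤ with |e_i| ≤ r − 1 for all i, e_i = d_i for all i < D, and y = Σ_{i=0}^∞ e_i · r^{-(i+1)}. -/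
/-! Rescaling the error `y - p` by `r ^ D` puts it in `[-1, 1]`; the ordinary base-`r` expansion
of its absolute value, with the sign of `y - p` attached to every digit, supplies the digits
after position `D`. -/

open Finset

theorem exists_hasSum_digits_of_mem_Icc_zero_one {r : ℕ} (hr : 1 < r) {z : ℝ}
    (hz : z ∈ Set.Icc 0 1) :
    ∃ a : ℕ → ℤ, (∀ i, |a i| ≤ (r : ℤ) - 1) ∧
      HasSum (fun i : ℕ => (a i : ℝ) * (r : ℝ) ^ (-(i + 1 : ℤ))) z := by
  obtain ⟨a, -, rfl⟩ := Real.ofDigits_SurjOn hr hz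
  refine ⟨fun i => a i, fun i => ?_, ?_⟩
  · show |((a i : ℕ) : ℤ)| ≤ _
    have := (a i).isLt
    rw [abs_of_nonneg (by positivity)]
    omega
  · refine (Real.summable_ofDigitsTerm (digits := a)).hasSum.congr_fun fun i => ?_
    rw [Real.ofDigitsTerm, ← zpow_natCast, ← zpow_neg]
    push_cast
    rfl

theorem exists_hasSum_signedDigits_of_mem_Icc {r : ℕ} (hr : 1 < r) {z : ℝ}
    (hz : z ∈ Set.Icc (-1) 1) :
    ∃ a : ℕ → ℤ, (∀ i, |a i| ≤ (r : ℤ) - 1) ∧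
      HasSum (fun i : ℕ => (a i : ℝ) * (r : ℝ) ^ (-(i + 1 : ℤ))) z := by
  rcases le_total 0 z with hz₀ | hz₀
  · exact exists_hasSum_digits_of_mem_Icc_zero_one hr ⟨hz₀, hz.2⟩
  · obtain ⟨a, ha, hsum⟩ :=
      exists_hasSum_digits_of_mem_Icc_zero_one hr (z := -z) ⟨by linarith, by linarith [hz.1]⟩
    refine ⟨-a, fun i => by simpa using ha i, ?_⟩
    simpa [neg_mul] using hsum.neg

theorem hasSum_prepend_digits {b : ℝ} (hb : b ≠ 0) (D : ℕ) (d a : ℕ → ℤ) {z : ℝ}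
    (ha : HasSum (fun i : ℕ => (a i : ℝ) * b ^ (-(i + 1 : ℤ))) z) :
    HasSum (fun i : ℕ => ((if i < D then d i else a (i - D) : ℤ) : ℝ) * b ^ (-(i + 1 : ℤ)))
      (∑ i ∈ range D, (d i : ℝ) * b ^ (-(i + 1 : ℤ)) + b ^ (-(D : ℤ)) * z) := by
  have hprefix : ∑ i ∈ range D, ((if i < D then d i else a (i - D) : ℤ) : ℝ) *
      b ^ (-(i + 1 : ℤ)) = ∑ i ∈ range D, (d i : ℝ) * b ^ (-(i + 1 : ℤ)) :=
    sum_congr rfl fun i hi => by rw [if_pos (mem_range.mp hi)]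
  rw [← hprefix, add_comm, ← hasSum_nat_add_iff]
  refine (ha.mul_left (b ^ (-(D : ℤ)))).congr_fun fun n => ?_
  rw [if_neg (by omega), Nat.add_sub_cancel, mul_left_comm, ← zpow_add₀ hb]
  push_cast
  ring_nf

theorem redundant_representation_extension_general
    (r D : ℕ) (hr : 2 ≤ r)
    (d : ℕ → ℤ) (hd : ∀ i, |d i| ≤ (r : ℤ) - 1)
    (p : ℝ) (hp : p = ∑ i ∈ Finset.range D, (d i : ℝ) * (r : ℝ) ^ (-(i + 1 : ℤ)))
    (y : ℝ) (hy : |y - p| ≤ (r : ℝ) ^ (-(D : ℤ))) :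
    ∃ e : ℕ → ℤ, (∀ i, |e i| ≤ (r : ℤ) - 1) ∧ (∀ i < D, e i = d i) ∧
      HasSum (fun i : ℕ => (e i : ℝ) * (r : ℝ) ^ (-(i + 1 : ℤ))) y := by
  have hr₀ : (r : ℝ) ≠ 0 := by positivity
  have hz : (y - p) * (r : ℝ) ^ (D : ℤ) ∈ Set.Icc (-1) 1 := by
    rw [Set.mem_Icc, ← abs_le, abs_mul, abs_zpow, Nat.abs_cast]
    calc |y - p| * (r : ℝ) ^ (D : ℤ) ≤ (r : ℝ) ^ (-(D : ℤ)) * (r : ℝ) ^ (D : ℤ) := by gcongr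
      _ = 1 := by rw [← zpow_add₀ hr₀, neg_add_cancel, zpow_zero]
  obtain ⟨a, ha, hsum⟩ := exists_hasSum_signedDigits_of_mem_Icc hr hz
  refine ⟨fun i => if i < D then d i else a (i - D), fun i => ?_, fun i hi => if_pos hi, ?_⟩
  · dsimp only
    split_ifs
    exacts [hd i, ha (i - D)]
  · convert hasSum_prepend_digits hr₀ D d a hsum using 1
    rw [← hp, mul_left_comm, ← zpow_add₀ hr₀, neg_add_cancel, zpow_zero, mul_one,
      add_sub_cancel]

/-- If `p` is a `D`-digit symmetric maximally redundant signed-digit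
radix-`r` number, then every real `y` with `|y - p| ≤ r^(-D)` admits a full
representation agreeing with `p` in its first `D` digits. -/
theorem redundant_representation_extension
    (r D : ℕ) (hr : 2 ≤ r) (hD : 1 ≤ D)
    (d : ℕ → ℤ) (hd : ∀ i, |d i| ≤ (r : ℤ) - 1)
    (p : ℝ) (hp : p = ∑ i ∈ Finset.range D, (d i : ℝ) * (r : ℝ) ^ (-(i + 1 : ℤ)))
    (y : ℝ) (hy : |y - p| ≤ (r : ℝ) ^ (-(D : ℤ))) :
    ∃ e : ℕ → ℤ, (∀ i, |e i| ≤ (r : ℤ) - 1) ∧ (∀ i < D, e i = d i) ∧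
      HasSum (fun i : ℕ => (e i : ℝ) * (r : ℝ) ^ (-(i + 1 : ℤ))) y :=
  redundant_representation_extension_general r D hr d hd p hp y hy
end

section
/- Let r ≥ 2 be an integer radix and D ≥ 1. Let (x_k)_{k∈ℕ} be a sequence of reals that is Fejér monotone with respect to the single point x, i.e. |x_{k+1} − x| ≤ |x_k − x| for all k, and assume |x| ≤ 1 − 2·r^{-D}. If some element n of the sequence satisfies |x_n − x| ≤ r^{-D}/2, then there exists a choice of symmetric maximally redundant signed-digit radix-r representations of the sequence elements in which the first D digits of all elements from index n onward are stable: there exist digit sequences d^{(k)} : ℕ → ℤ for each k ≥ n with |d^{(k)}_i| ≤ r − 1 for all i, x_k = Σ_{i=0}^∞ d^{(k)}_i · r^{-(i+1)}, and d^{(k)}_i = d^{(n)}_i for all i < D and all k ≥ n. -/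
/-!
Round `xs` to the nearest multiple `a = m r^(-D)`. The margin `|xs| ≤ 1 - 2 r^(-D)` gives
`|m| < r^D`, so `a` has an exact `D`-digit signed expansion. By Fejér monotonicity every `x k`
with `k ≥ n` lies within `r^(-D)/2` of `xs`, hence within `r^(-D)` of `a`, so the rescaled remainder
`(x k - a) r^D` lies in `[-1, 1]` and has a greedy signed-digit expansion. Appending it to the
digits of `a` represents `x k`, and the first `D` digits are those of `a` for every `k`.
-/

open Finset Filter Topology

def IsSignedDigitExpansion (r : ℕ) (d : ℕ → ℤ) (v : ℝ) : Prop :=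
  (∀ i, |d i| ≤ (r : ℤ) - 1) ∧ HasSum (fun i : ℕ => (d i : ℝ) * (r : ℝ) ^ (-(i + 1 : ℤ))) v

/-- Clamping `⌊r s⌋` into the digit range keeps the next state `r s - digit` in `[-1, 1]`. -/
noncomputable def greedyDigit (r : ℕ) (s : ℝ) : ℤ :=
  max (-((r : ℤ) - 1)) (min ((r : ℤ) - 1) ⌊(r : ℝ) * s⌋)

noncomputable def greedyState (r : ℕ) (t : ℝ) : ℕ → ℝ
  | 0 => t
  | i + 1 => r * greedyState r t i - greedyDigit r (greedyState r t i)

noncomputable def greedyDigits (r : ℕ) (t : ℝ) (i : ℕ) : ℤ :=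
  greedyDigit r (greedyState r t i)

section

variable {r : ℕ}

lemma abs_greedyDigit_le (hr : 0 < r) (s : ℝ) : |greedyDigit r s| ≤ (r : ℤ) - 1 :=
  abs_le.2 ⟨le_max_left _ _, max_le (by omega) (min_le_left _ _)⟩

lemma abs_mul_sub_greedyDigit_le_one (hr : 0 < r) {s : ℝ} (hs : |s| ≤ 1) :
    |r * s - greedyDigit r s| ≤ 1 := by
  have hu : |(r : ℝ) * s| ≤ r := by
    rw [abs_mul, Nat.abs_cast]; exact mul_le_of_le_one_right (Nat.cast_nonneg r) hs
  set u := (r : ℝ) * s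
  have hfl := Int.floor_le u
  have hlt := Int.lt_floor_add_one u
  obtain ⟨hu₁, hu₂⟩ := abs_le.1 hu
  unfold greedyDigit
  rcases le_total ⌊u⌋ ((r : ℤ) - 1) with htop | htop
  · rcases le_total ⌊u⌋ (-((r : ℤ) - 1)) with hbot | hbot
    · have hbot' : (⌊u⌋ : ℝ) ≤ -((r : ℝ) - 1) := by exact_mod_cast hbot
      rw [min_eq_right htop, max_eq_left hbot, abs_le]
      push_cast; constructor <;> linarith
    · rw [min_eq_right htop, max_eq_right hbot, abs_le]
      constructor <;> linarith
  · have htop' : (r : ℝ) - 1 ≤ ⌊u⌋ := by exact_mod_cast htop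
    rw [min_eq_left htop, max_eq_right (by omega), abs_le]
    push_cast; constructor <;> linarith

lemma abs_greedyState_le_one (hr : 0 < r) {t : ℝ} (ht : |t| ≤ 1) (N : ℕ) :
    |greedyState r t N| ≤ 1 := by
  induction N with
  | zero => exact ht
  | succ N ih => exact abs_mul_sub_greedyDigit_le_one hr ih

lemma sub_sum_range_greedyDigits (hr : r ≠ 0) (t : ℝ) (N : ℕ) :
    t - ∑ i ∈ range N, (greedyDigits r t i : ℝ) * (r : ℝ) ^ (-(i + 1 : ℤ))
      = greedyState r t N * (r : ℝ) ^ (-(N : ℤ)) := by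
  have hr' : (r : ℝ) ≠ 0 := Nat.cast_ne_zero.2 hr
  induction N with
  | zero => simp [greedyState]
  | succ N ih =>
    have hpow : (r : ℝ) ^ (-(N : ℤ)) = r * (r : ℝ) ^ (-(N + 1 : ℤ)) := by
      rw [← zpow_one_add₀ hr']; ring_nf
    rw [sum_range_succ, ← sub_sub, ih, hpow, greedyDigits, greedyState]
    push_cast
    ring

lemma summable_signedDigits (hr : 2 ≤ r) {d : ℕ → ℤ} (hd : ∀ i, |d i| ≤ (r : ℤ) - 1) :
    Summable (fun i : ℕ => (d i : ℝ) * (r : ℝ) ^ (-(i + 1 : ℤ))) := by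
  have hr' : (1 : ℝ) < r := by exact_mod_cast hr
  refine Summable.of_norm_bounded (summable_geometric_of_lt_one (by positivity)
    (inv_lt_one_of_one_lt₀ hr')) fun i => ?_
  have hdi : |(d i : ℝ)| ≤ r := by
    have : |(d i : ℝ)| ≤ (r : ℝ) - 1 := by exact_mod_cast hd i
    linarith
  have hpow : (r : ℝ) ^ (-(i + 1 : ℤ)) = ((r : ℝ)⁻¹) ^ i * (r : ℝ)⁻¹ := by
    rw [← pow_succ, inv_pow, ← zpow_natCast, ← zpow_neg]; push_cast; rfl
  rw [Real.norm_eq_abs, abs_mul, hpow,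
    abs_of_nonneg (by positivity : (0 : ℝ) ≤ (r : ℝ)⁻¹ ^ i * (r : ℝ)⁻¹)]
  calc |(d i : ℝ)| * ((r : ℝ)⁻¹ ^ i * (r : ℝ)⁻¹) ≤ r * ((r : ℝ)⁻¹ ^ i * (r : ℝ)⁻¹) := by
        gcongr
    _ = (r : ℝ)⁻¹ ^ i := by field_simp

lemma isSignedDigitExpansion_greedyDigits (hr : 2 ≤ r) {t : ℝ} (ht : |t| ≤ 1) :
    IsSignedDigitExpansion r (greedyDigits r t) t := by
  have hdig : ∀ i, |greedyDigits r t i| ≤ (r : ℤ) - 1 := fun i => abs_greedyDigit_le (by omega) _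
  refine ⟨hdig, (summable_signedDigits hr hdig).hasSum_iff_tendsto_nat.2 ?_⟩
  have hr' : (1 : ℝ) < r := by exact_mod_cast hr
  have herror : Tendsto (fun N : ℕ => greedyState r t N * (r : ℝ) ^ (-(N : ℤ))) atTop (𝓝 0) := by
    refine squeeze_zero_norm (fun N => ?_) (tendsto_pow_atTop_nhds_zero_of_lt_one
      (inv_nonneg.2 (Nat.cast_nonneg r)) (inv_lt_one_of_one_lt₀ hr'))
    rw [Real.norm_eq_abs, abs_mul, zpow_neg, zpow_natCast, ← inv_pow,
      abs_of_nonneg (by positivity : (0 : ℝ) ≤ (r : ℝ)⁻¹ ^ N)]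
    exact mul_le_of_le_one_left (by positivity) (abs_greedyState_le_one (by omega) ht N)
  have := (tendsto_const_nhds (x := t)).sub herror
  simp only [← sub_sum_range_greedyDigits (by omega : r ≠ 0) t, sub_sub_cancel, sub_zero] at this
  exact this

lemma IsSignedDigitExpansion.prepend {p e : ℕ → ℤ} {t : ℝ} (hp : ∀ i, |p i| ≤ (r : ℤ) - 1)
    (he : IsSignedDigitExpansion r e t) (D : ℕ) :
    IsSignedDigitExpansion r (fun i => if i < D then p i else e (i - D))
      (∑ i ∈ range D, (p i : ℝ) * (r : ℝ) ^ (-(i + 1 : ℤ)) + t * (r : ℝ) ^ (-(D : ℤ))) := by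
  refine ⟨fun i => by dsimp only; split_ifs; exacts [hp i, he.1 _], ?_⟩
  have hhead : ∑ i ∈ range D, (p i : ℝ) * (r : ℝ) ^ (-(i + 1 : ℤ)) =
      ∑ i ∈ range D, ((if i < D then p i else e (i - D) : ℤ) : ℝ) * (r : ℝ) ^ (-(i + 1 : ℤ)) :=
    sum_congr rfl fun i hi => by rw [if_pos (mem_range.1 hi)]
  rw [hhead, add_comm]
  have hshift : ∀ i : ℕ, (e i : ℝ) * (r : ℝ) ^ (-(i + 1 : ℤ)) * (r : ℝ) ^ (-(D : ℤ)) =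
      ((if i + D < D then p (i + D) else e (i + D - D) : ℤ) : ℝ) *
        (r : ℝ) ^ (-((i + D : ℕ) + 1 : ℤ)) := fun i => by
    rw [if_neg (by omega), Nat.add_sub_cancel, mul_assoc,
      ← zpow_add' (Or.inr (Or.inl (by omega)))]
    push_cast; ring_nf
  exact (hasSum_nat_add_iff D).1
    (by simpa only [hshift] using he.2.mul_right ((r : ℝ) ^ (-(D : ℤ))))

lemma exists_signedDigits_sum_range_eq_int_mul (hr : 0 < r) (D : ℕ) (m : ℤ)
    (hm : m.natAbs < r ^ D) :
    ∃ p : ℕ → ℤ, (∀ i, |p i| ≤ (r : ℤ) - 1) ∧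
      ∑ i ∈ range D, (p i : ℝ) * (r : ℝ) ^ (-(i + 1 : ℤ)) = m * (r : ℝ) ^ (-(D : ℤ)) := by
  induction D generalizing m with
  | zero => exact ⟨0, fun _ => by simp; omega, by simp_all⟩
  | succ D ih =>
    obtain ⟨p, hp, hsum⟩ := ih (m.tdiv r) (by
      rw [Int.natAbs_tdiv, Int.natAbs_natCast]
      exact (Nat.div_lt_iff_lt_mul hr).2 (pow_succ r D ▸ hm))
    have hmod : |m.tmod r| ≤ (r : ℤ) - 1 := by
      have := Nat.mod_lt m.natAbs (by omega : 0 < r)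
      rw [Int.abs_eq_natAbs, Int.natAbs_tmod, Int.natAbs_natCast]; omega
    refine ⟨fun i => if i < D then p i else m.tmod r,
      fun i => by dsimp only; split_ifs; exacts [hp i, hmod], ?_⟩
    have hr' : (r : ℝ) ≠ 0 := by positivity
    have hm' : (m : ℝ) = r * (m.tdiv r : ℤ) + (m.tmod r : ℤ) := by
      exact_mod_cast (Int.mul_tdiv_add_tmod m r).symm
    have hpow : (r : ℝ) ^ (-(D : ℤ)) = r * (r : ℝ) ^ (-(D + 1 : ℤ)) := by
      rw [← zpow_one_add₀ hr']; ring_nf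
    have hhead : ∑ i ∈ range D, ((if i < D then p i else m.tmod r : ℤ) : ℝ) *
        (r : ℝ) ^ (-(i + 1 : ℤ)) = ∑ i ∈ range D, (p i : ℝ) * (r : ℝ) ^ (-(i + 1 : ℤ)) :=
      sum_congr rfl fun i hi => by rw [if_pos (mem_range.1 hi)]
    rw [sum_range_succ, hhead]
    dsimp only
    rw [if_neg (lt_irrefl D), hsum, hm', hpow]
    push_cast; ring

lemma exists_int_natAbs_lt_abs_sub_le (hr : 0 < r) (D : ℕ) {y : ℝ}
    (hy : |y| + (r : ℝ) ^ (-(D : ℤ)) / 2 < 1) :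
    ∃ m : ℤ, m.natAbs < r ^ D ∧ |y - m * (r : ℝ) ^ (-(D : ℤ))| ≤ (r : ℝ) ^ (-(D : ℤ)) / 2 := by
  have hR : (0 : ℝ) < r ^ D := by positivity
  rw [zpow_neg, zpow_natCast] at hy ⊢
  have hround := abs_sub_round (y * r ^ D)
  set m := round (y * r ^ D)
  refine ⟨m, ?_, ?_⟩
  · have hyR : |y * r ^ D| + 1 / 2 < r ^ D := by
      rw [abs_mul, abs_of_pos hR]
      calc |y| * r ^ D + 1 / 2 = (|y| + ((r : ℝ) ^ D)⁻¹ / 2) * r ^ D := by field_simp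
        _ < 1 * r ^ D := by gcongr
        _ = r ^ D := one_mul _
    have hm : |(m : ℝ)| < r ^ D := by
      linarith [abs_sub_abs_le_abs_sub (m : ℝ) (y * r ^ D), abs_sub_comm (m : ℝ) (y * r ^ D)]
    have hm' : ((m.natAbs : ℕ) : ℝ) < ((r ^ D : ℕ) : ℝ) := by
      rwa [Nat.cast_natAbs, Nat.cast_pow, Int.cast_abs]
    exact_mod_cast hm'
  · have hdiff : y - m * ((r : ℝ) ^ D)⁻¹ = (y * r ^ D - m) * ((r : ℝ) ^ D)⁻¹ := by field_simp
    rw [hdiff, abs_mul, abs_of_pos (inv_pos.2 hR)]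
    linarith [mul_le_mul_of_nonneg_right hround (inv_pos.2 hR).le]

end

theorem fejer_monotone_digit_stability_general
    (r D : ℕ) (hr : 2 ≤ r)
    (x : ℕ → ℝ) (xs : ℝ)
    (hfejer : ∀ k : ℕ, |x (k + 1) - xs| ≤ |x k - xs|)
    (hxs : |xs| ≤ 1 - 2 * (r : ℝ) ^ (-(D : ℤ)))
    (n : ℕ) (hn : |x n - xs| ≤ (r : ℝ) ^ (-(D : ℤ)) / 2) :
    ∃ d : ℕ → ℕ → ℤ, ∀ k : ℕ, n ≤ k →
      (∀ i, |d k i| ≤ (r : ℤ) - 1) ∧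
      HasSum (fun i : ℕ => (d k i : ℝ) * (r : ℝ) ^ (-(i + 1 : ℤ))) (x k) ∧
      (∀ i < D, d k i = d n i) := by
  have hρ : (0 : ℝ) < r ^ (-(D : ℤ)) := by positivity
  obtain ⟨m, hm, hxs_m⟩ :=
    exists_int_natAbs_lt_abs_sub_le (r := r) (by omega) D (y := xs) (by linarith)
  obtain ⟨p, hp, hp_sum⟩ := exists_signedDigits_sum_range_eq_int_mul (by omega) D m hm
  have hclose : ∀ k, n ≤ k → |(x k - m * r ^ (-(D : ℤ))) / r ^ (-(D : ℤ))| ≤ 1 := by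
    intro k hk
    rw [abs_div, abs_of_pos hρ, div_le_one hρ]
    calc |x k - m * r ^ (-(D : ℤ))|
        ≤ |x k - xs| + |xs - m * r ^ (-(D : ℤ))| := abs_sub_le _ _ _
      _ ≤ r ^ (-(D : ℤ)) / 2 + r ^ (-(D : ℤ)) / 2 :=
        add_le_add ((antitone_nat_of_succ_le (f := fun k => |x k - xs|) hfejer hk).trans hn) hxs_m
      _ = r ^ (-(D : ℤ)) := add_halves _
  refine ⟨fun k i => if i < D then p i
    else greedyDigits r ((x k - m * r ^ (-(D : ℤ))) / r ^ (-(D : ℤ))) (i - D), fun k hk => ?_⟩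
  have h := (isSignedDigitExpansion_greedyDigits hr (hclose k hk)).prepend hp D
  rw [hp_sum, div_mul_cancel₀ _ hρ.ne', add_sub_cancel] at h
  exact ⟨h.1, h.2, fun i hi => by simp only [if_pos hi]⟩

/-- Theorem 1 of the paper, scalar case: a Fejér monotone real
sequence with limit point `x` develops `D` stable most-significant digits in the
symmetric maximally redundant signed-digit radix-`r` representation once an
element comes within `r^(-D)/2` of `x`. -/
theorem fejer_monotone_digit_stability
    (r D : ℕ) (hr : 2 ≤ r) (hD : 1 ≤ D)
    (x : ℕ → ℝ) (xs : ℝ)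
    (hfejer : ∀ k : ℕ, |x (k + 1) - xs| ≤ |x k - xs|)
    (hxs : |xs| ≤ 1 - 2 * (r : ℝ) ^ (-(D : ℤ)))
    (n : ℕ) (hn : |x n - xs| ≤ (r : ℝ) ^ (-(D : ℤ)) / 2) :
    ∃ d : ℕ → ℕ → ℤ, ∀ k : ℕ, n ≤ k →
      (∀ i, |d k i| ≤ (r : ℤ) - 1) ∧
      HasSum (fun i : ℕ => (d k i : ℝ) * (r : ℝ) ^ (-(i + 1 : ℤ))) (x k) ∧
      (∀ i < D, d k i = d n i) :=
  fejer_monotone_digit_stability_general r D hr x xs hfejer hxs n hn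
end

section
/- Let r ≥ 2 be an integer radix and D ≥ 1. Let f : ℝ → ℝ be Lipschitz continuous with constant 1 (nonexpansive) and have a fixed point x* = f(x*) with |x*| ≤ 1 − 2·r^{-D}. Let (x_k)_{k∈ℕ} be a sequence of iterates with x_{k+1} = f(x_k) for all k. If some iterate n satisfies |x_n − x*| ≤ r^{-D}/2, then there exists a choice of symmetric maximally redundant signed-digit radix-r representations of the iterates in which the first D digits are stable from iterate n onward: there exist digit sequences d^{(k)} : ℕ → ℤ for each k ≥ n with |d^{(k)}_i| ≤ r − 1 for all i, x_k = Σ_{i=0}^∞ d^{(k)}_i · r^{-(i+1)}, and d^{(k)}_i = d^{(n)}_i for all i < D and all k ≥ n. -/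
/-!
Round the fixed point to a multiple `m r⁻ᴰ`; the bound on `|xs|` keeps `|m| < rᴰ`, so `m r⁻ᴰ` is a
`D`-digit signed-digit number. By nonexpansiveness every iterate from `n` on stays within
`r⁻ᴰ / 2` of `xs`, hence within `r⁻ᴰ` of `m r⁻ᴰ`. Scaling such a remainder by `rᴰ` lands in
`[-1, 1]`, where every number has a signed-digit expansion, and appending that expansion to the
digits of `m` gives representations of all these iterates with the same first `D` digits.
-/

open Finset

theorem antitone_dist_fixedPt_of_lipschitzWith_one {α : Type*} [PseudoMetricSpace α]
    {f : α → α} (hf : LipschitzWith 1 f) {p : α} (hp : Function.IsFixedPt f p)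
    {x : ℕ → α} (hx : ∀ k, x (k + 1) = f (x k)) : Antitone fun k => dist (x k) p :=
  antitone_nat_of_succ_le fun k => by
    simpa [hx k, hp.eq] using hf.dist_le_mul (x k) p

theorem exists_int_abs_sub_mul_le (y : ℝ) {ε : ℝ} (hε : 0 < ε) :
    ∃ m : ℤ, |y - m * ε| ≤ ε / 2 := by
  refine ⟨round (y / ε), ?_⟩
  calc |y - round (y / ε) * ε| = |y / ε - round (y / ε)| * ε := by
        rw [← abs_of_pos hε, ← abs_mul, abs_of_pos hε, sub_mul, div_mul_cancel₀ y hε.ne']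
    _ ≤ 1 / 2 * ε := by gcongr; exact abs_sub_round _
    _ = ε / 2 := by ring

theorem natAbs_lt_pow_of_abs_mul_zpow_lt_one {r : ℕ} (hr : 0 < r) {D : ℕ} {m : ℤ}
    (h : |(m : ℝ) * (r : ℝ) ^ (-(D : ℤ))| < 1) : m.natAbs < r ^ D := by
  rw [abs_mul, zpow_neg, zpow_natCast, abs_inv, abs_pow, Nat.abs_cast, ← div_eq_mul_inv,
    div_lt_one (by positivity)] at h
  have : ((m.natAbs : ℕ) : ℝ) < ((r ^ D : ℕ) : ℝ) := by
    rw [Nat.cast_natAbs, Int.cast_abs]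
    push_cast
    exact h
  exact_mod_cast this

theorem exists_digits_sum_eq_int_mul_zpow {r : ℕ} (hr : 0 < r) :
    ∀ (D : ℕ) {m : ℤ}, m.natAbs < r ^ D → ∃ c : ℕ → ℤ, (∀ i, |c i| ≤ (r : ℤ) - 1) ∧
      ∑ i ∈ range D, (c i : ℝ) * (r : ℝ) ^ (-(i + 1 : ℤ)) = m * (r : ℝ) ^ (-(D : ℤ))
  | 0, m, hm =>
    ⟨0, fun _ => by simp only [Pi.zero_apply, abs_zero]; omega,
      by simp [show m = 0 by simpa using hm]⟩
  | D + 1, m, hm => by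
    -- Truncating, not floor, division: floor division overshoots, e.g. `-1 / r = -1`.
    obtain ⟨c, hc, hsum⟩ := exists_digits_sum_eq_int_mul_zpow hr D (m := m.tdiv r) (by
      rw [Int.natAbs_tdiv, Int.natAbs_natCast]
      exact Nat.div_lt_of_lt_mul (by rwa [← pow_succ']))
    refine ⟨fun i => if i < D then c i else m.tmod r, fun i => ?_, ?_⟩
    · dsimp only
      split_ifs
      · exact hc i
      · have := Nat.mod_lt m.natAbs hr
        rw [Int.abs_eq_natAbs, Int.natAbs_tmod, Int.natAbs_natCast]
        omega
    · dsimp only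
      rw [sum_range_succ, sum_congr rfl fun i hi => by rw [if_pos (mem_range.mp hi)], hsum,
        if_neg (lt_irrefl D)]
      conv_rhs => rw [← Int.tdiv_mul_add_tmod m r]
      have hzpow : (r : ℝ) ^ (-(D : ℤ)) = r * (r : ℝ) ^ (-((D + 1 : ℕ) : ℤ)) := by
        rw [← zpow_one_add₀ (by positivity)]
        push_cast
        ring_nf
      rw [hzpow]
      push_cast
      ring

def IsSignedDigitRep (r : ℕ) (d : ℕ → ℤ) (x : ℝ) : Prop :=
  (∀ i, |d i| ≤ (r : ℤ) - 1) ∧ HasSum (fun i : ℕ => (d i : ℝ) * (r : ℝ) ^ (-(i + 1 : ℤ))) x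

namespace IsSignedDigitRep

variable {r : ℕ}

/-- Shifting the standard digits `a i ∈ [0, r)` of `(z + 1) / 2` to `2 a i - (r - 1)`
uses `0.(r-1)(r-1)… = 1`. -/
theorem exists_of_abs_le_one (hr : 2 ≤ r) {z : ℝ} (hz : |z| ≤ 1) :
    ∃ d, IsSignedDigitRep r d z := by
  obtain ⟨hz₁, hz₂⟩ := abs_le.mp hz
  obtain ⟨a, -, ha⟩ := Real.ofDigits_SurjOn (b := r) hr
    (show (z + 1) / 2 ∈ Set.Icc 0 1 from ⟨by linarith, by linarith⟩)
  have hsum_a : HasSum (Real.ofDigitsTerm a) ((z + 1) / 2) :=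
    ha ▸ Real.summable_ofDigitsTerm.hasSum
  have hsum_top : HasSum (Real.ofDigitsTerm fun _ => ⟨r - 1, Nat.sub_one_lt_of_lt hr⟩) 1 :=
    Real.ofDigits_const_last_eq_one' hr ▸ Real.summable_ofDigitsTerm.hasSum
  refine ⟨fun i => 2 * (a i : ℤ) - ((r : ℤ) - 1), fun i => ?_, ?_⟩
  · have := (a i).isLt
    rw [abs_le]
    constructor <;> dsimp only <;> omega
  · have h := (hsum_a.mul_left 2).sub hsum_top
    rw [show 2 * ((z + 1) / 2) - 1 = z by ring] at h
    refine h.congr_fun fun i => ?_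
    simp only [Real.ofDigitsTerm]
    push_cast [Nat.cast_sub (by omega : 1 ≤ r)]
    rw [zpow_neg, ← Nat.cast_add_one, zpow_natCast]
    ring

theorem append (hr : 0 < r) (D : ℕ) {c e : ℕ → ℤ} (hc : ∀ i, |c i| ≤ (r : ℤ) - 1) {z : ℝ}
    (he : IsSignedDigitRep r e z) :
    IsSignedDigitRep r (fun i => if i < D then c i else e (i - D))
      (∑ i ∈ range D, (c i : ℝ) * (r : ℝ) ^ (-(i + 1 : ℤ)) + (r : ℝ) ^ (-(D : ℤ)) * z) := by
  refine ⟨fun i => by dsimp only; split_ifs; exacts [hc i, he.1 _], ?_⟩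
  have hprefix : ∑ i ∈ range D, ((if i < D then c i else e (i - D) : ℤ) : ℝ) *
      (r : ℝ) ^ (-(i + 1 : ℤ)) = ∑ i ∈ range D, (c i : ℝ) * (r : ℝ) ^ (-(i + 1 : ℤ)) :=
    sum_congr rfl fun i hi => by rw [if_pos (mem_range.mp hi)]
  rw [← hasSum_nat_add_iff' D, hprefix, add_sub_cancel_left]
  refine (he.2.mul_left _).congr_fun fun i => ?_
  dsimp only
  rw [if_neg (by omega), Nat.add_sub_cancel, mul_left_comm, ← zpow_add₀ (by positivity)]
  push_cast
  ring_nf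

theorem exists_extend_of_abs_sub_le (hr : 2 ≤ r) {D : ℕ} {c : ℕ → ℤ}
    (hc : ∀ i, |c i| ≤ (r : ℤ) - 1) {x : ℝ}
    (hx : |x - ∑ i ∈ range D, (c i : ℝ) * (r : ℝ) ^ (-(i + 1 : ℤ))| ≤ (r : ℝ) ^ (-(D : ℤ))) :
    ∃ d, IsSignedDigitRep r d x ∧ ∀ i < D, d i = c i := by
  set P := ∑ i ∈ range D, (c i : ℝ) * (r : ℝ) ^ (-(i + 1 : ℤ))
  have hrD : (r : ℝ) ^ (-(D : ℤ)) * (r : ℝ) ^ (D : ℤ) = 1 := by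
    rw [← zpow_add₀ (by positivity), neg_add_cancel, zpow_zero]
  obtain ⟨e, he⟩ := exists_of_abs_le_one hr (z := (r : ℝ) ^ (D : ℤ) * (x - P)) (by
    rw [abs_mul, abs_of_pos (by positivity), ← hrD, mul_comm]
    gcongr)
  refine ⟨fun i => if i < D then c i else e (i - D), ?_, fun i hi => if_pos hi⟩
  convert he.append (by omega) D hc using 1
  rw [← mul_assoc, hrD, one_mul, add_sub_cancel]

end IsSignedDigitRep

theorem nonexpansive_iteration_digit_stability_general
    (r D : ℕ) (hr : 2 ≤ r)
    (f : ℝ → ℝ) (hLip : ∀ a b : ℝ, |f a - f b| ≤ |a - b|)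
    (xs : ℝ) (hfix : f xs = xs)
    (hxs : |xs| ≤ 1 - 2 * (r : ℝ) ^ (-(D : ℤ)))
    (x : ℕ → ℝ) (hx : ∀ k : ℕ, x (k + 1) = f (x k))
    (n : ℕ) (hn : |x n - xs| ≤ (r : ℝ) ^ (-(D : ℤ)) / 2) :
    ∃ d : ℕ → ℕ → ℤ, ∀ k : ℕ, n ≤ k →
      (∀ i, |d k i| ≤ (r : ℤ) - 1) ∧
      HasSum (fun i : ℕ => (d k i : ℝ) * (r : ℝ) ^ (-(i + 1 : ℤ))) (x k) ∧
      (∀ i < D, d k i = d n i) := by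
  set ε : ℝ := (r : ℝ) ^ (-(D : ℤ))
  have hε : 0 < ε := by positivity
  obtain ⟨m, hm⟩ := exists_int_abs_sub_mul_le xs hε
  have hm_lt : m.natAbs < r ^ D := natAbs_lt_pow_of_abs_mul_zpow_lt_one (by omega) (by
    linarith [abs_sub_abs_le_abs_sub (m * ε) xs, abs_sub_comm (m * ε) xs])
  obtain ⟨c, hc, hc_sum⟩ := exists_digits_sum_eq_int_mul_zpow (by omega) D hm_lt
  have hf : LipschitzWith 1 f :=
    LipschitzWith.of_dist_le_mul fun a b => by simpa [Real.dist_eq] using hLip a b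
  have hclose : ∀ k, n ≤ k → |x k - m * ε| ≤ ε := fun k hk => calc
    |x k - m * ε| ≤ |x k - xs| + |xs - m * ε| := abs_sub_le _ _ _
    _ ≤ |x n - xs| + ε / 2 := add_le_add (by
      simpa [Real.dist_eq] using antitone_dist_fixedPt_of_lipschitzWith_one hf hfix hx hk) hm
    _ ≤ ε := by linarith
  have hext : ∀ k, n ≤ k → ∃ d, IsSignedDigitRep r d (x k) ∧ ∀ i < D, d i = c i :=
    fun k hk => IsSignedDigitRep.exists_extend_of_abs_sub_le hr hc (hc_sum ▸ hclose k hk)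
  choose! d hd hdc using hext
  exact ⟨d, fun k hk => ⟨(hd k hk).1, (hd k hk).2,
    fun i hi => (hdc k hk i hi).trans (hdc n le_rfl i hi).symm⟩⟩

/-- Theorem 2 of the paper: for a fixed-point iteration of a
nonexpansive function `f : ℝ → ℝ` (Lipschitz with constant 1) with fixed point
`xs`, once an iterate comes within `r^(-D)/2` of `xs` there is a choice of
symmetric maximally redundant signed-digit radix-`r` representations of the
iterates whose first `D` digits are stable from that iterate onward. -/
theorem nonexpansive_iteration_digit_stability
    (r D : ℕ) (hr : 2 ≤ r) (hD : 1 ≤ D)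
    (f : ℝ → ℝ) (hLip : ∀ a b : ℝ, |f a - f b| ≤ |a - b|)
    (xs : ℝ) (hfix : f xs = xs)
    (hxs : |xs| ≤ 1 - 2 * (r : ℝ) ^ (-(D : ℤ)))
    (x : ℕ → ℝ) (hx : ∀ k : ℕ, x (k + 1) = f (x k))
    (n : ℕ) (hn : |x n - xs| ≤ (r : ℝ) ^ (-(D : ℤ)) / 2) :
    ∃ d : ℕ → ℕ → ℤ, ∀ k : ℕ, n ≤ k →
      (∀ i, |d k i| ≤ (r : ℤ) - 1) ∧
      HasSum (fun i : ℕ => (d k i : ℝ) * (r : ℝ) ^ (-(i + 1 : ℤ))) (x k) ∧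
      (∀ i < D, d k i = d n i) :=
  nonexpansive_iteration_digit_stability_general r D hr f hLip xs hfix hxs x hx n hn
end
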